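/- Preservation for the λᵘFi calculus: if · ⊢ e : A and e ↪ e', then · ⊢ e' : A. -/
import Mathlib


/-- Types: Int, Top, arrow, de Bruijn type variables, and recursive types μ. -/
inductive Ty : Type
| int : Ty
| top : Ty
| arrow : Ty → Ty → Ty
| var : Nat → Ty
| mu : Ty → Ty
deriving DecidableEq

/-- Shifting of de Bruijn type variables. -/
def tshift (d c : Nat) : Ty → Ty
| .int => .int
| .top => .top
| .arrow A B => .arrow (tshift d c A) (tshift d c B)
| .var n => if n < c then .var n else .var (n + d)
| .mu A => .mu (tshift d (c+1) A)

/-- Capture-avoiding substitution of type S for variable k. -/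
def tsubst (k : Nat) (S : Ty) : Ty → Ty
| .int => .int
| .top => .top
| .arrow A B => .arrow (tsubst k S A) (tsubst k S B)
| .var n => if n = k then S else if k < n then .var (n-1) else .var n
| .mu A => .mu (tsubst (k+1) (tshift 1 0 S) A)

/-- Well-formedness: all free type variables are below n. -/
def Ty.wf : Nat → Ty → Prop
| _, .int => True
| _, .top => True
| n, .arrow A B => A.wf n ∧ B.wf n
| n, .var i => i < n
| n, .mu A => A.wf (n+1)

/-- Brandt–Henglein inductive equi-recursive type equality H ⊢ A ≐ B. -/
inductive TyEq : List (Ty × Ty) → Ty → Ty → Prop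
| assump : (A, B) ∈ H → TyEq H A B
| refl : TyEq H A A
| trans : TyEq H A B → TyEq H B C → TyEq H A C
| symm : TyEq H A B → TyEq H B A
| unfold : TyEq H (.mu A) (tsubst 0 (.mu A) A)
| arrfix : TyEq ((Ty.arrow A1 A2, Ty.arrow B1 B2) :: H) A1 B1 →
           TyEq ((Ty.arrow A1 A2, Ty.arrow B1 B2) :: H) A2 B2 →
           TyEq H (.arrow A1 A2) (.arrow B1 B2)

/-- Cast operators, with de Bruijn cast variables (bound by cfix). -/
inductive Cast : Type
| cvar : Nat → Cast
| id : Cast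
| fold : Ty → Cast
| unfold : Ty → Cast
| arrow : Cast → Cast → Cast
| seq : Cast → Cast → Cast
| cfix : Cast → Cast
deriving DecidableEq

/-- The dual (reverse) cast ¬c. -/
def Cast.dual : Cast → Cast
| .cvar i => .cvar i
| .id => .id
| .fold A => .unfold A
| .unfold A => .fold A
| .arrow c1 c2 => .arrow c1.dual c2.dual
| .seq c1 c2 => .seq c2.dual c1.dual
| .cfix c => .cfix c.dual

/-- Shifting of cast variables. -/
def cshift (d c : Nat) : Cast → Cast
| .cvar n => if n < c then .cvar n else .cvar (n+d)
| .id => .id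
| .fold A => .fold A
| .unfold A => .unfold A
| .arrow c1 c2 => .arrow (cshift d c c1) (cshift d c c2)
| .seq c1 c2 => .seq (cshift d c c1) (cshift d c c2)
| .cfix c1 => .cfix (cshift d (c+1) c1)

/-- Capture-avoiding substitution of a cast for cast variable k. -/
def csubst (k : Nat) (s : Cast) : Cast → Cast
| .cvar n => if n = k then s else if k < n then .cvar (n-1) else .cvar n
| .id => .id
| .fold A => .fold A
| .unfold A => .unfold A
| .arrow c1 c2 => .arrow (csubst k s c1) (csubst k s c2)
| .seq c1 c2 => .seq (csubst k s c1) (csubst k s c2)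
| .cfix c1 => .cfix (csubst (k+1) (cshift 1 0 s) c1)

/-- Type casting judgment 𝔼 ⊢ A ↪ B : c (cast context as de Bruijn list). -/
inductive TypCast : List (Ty × Ty) → Ty → Ty → Cast → Prop
| id : TypCast E A A .id
| arrow : TypCast E A1 B1 c1 → TypCast E A2 B2 c2 →
    TypCast E (.arrow A1 A2) (.arrow B1 B2) (.arrow c1 c2)
| unfold : TypCast E (.mu A) (tsubst 0 (.mu A) A) (.unfold (.mu A))
| fold : TypCast E (tsubst 0 (.mu A) A) (.mu A) (.fold (.mu A))
| seq : TypCast E A B c1 → TypCast E B C c2 → TypCast E A C (.seq c1 c2)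
| var : E[n]? = some (A, B) → TypCast E A B (.cvar n)
| fix : TypCast ((Ty.arrow A1 A2, Ty.arrow B1 B2) :: E)
           (.arrow A1 A2) (.arrow B1 B2) (.arrow c1 c2) →
        TypCast E (.arrow A1 A2) (.arrow B1 B2) (.cfix (.arrow c1 c2))

/-- Terms of λᵘFi (de Bruijn term variables). -/
inductive Tm : Type
| var : Nat → Tm
| lit : Int → Tm
| app : Tm → Tm → Tm
| abs : Ty → Tm → Tm
| cast : Cast → Tm → Tm
deriving DecidableEq

def shiftTm (d c : Nat) : Tm → Tm
| .var n => if n < c then .var n else .var (n+d)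
| .lit n => .lit n
| .app a b => .app (shiftTm d c a) (shiftTm d c b)
| .abs A e => .abs A (shiftTm d (c+1) e)
| .cast cc e => .cast cc (shiftTm d c e)

/-- Capture-avoiding term substitution. -/
def substTm (k : Nat) (s : Tm) : Tm → Tm
| .var n => if n = k then s else if k < n then .var (n-1) else .var n
| .lit n => .lit n
| .app a b => .app (substTm k s a) (substTm k s b)
| .abs A e => .abs A (substTm (k+1) (shiftTm 1 0 s) e)
| .cast cc e => .cast cc (substTm k s e)

/-- Values of λᵘFi. -/
inductive Value : Tm → Prop
| lit : Value (.lit n)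
| abs : Value (.abs A e)
| fold : Value v → Value (.cast (.fold A) v)
| arrow : Value v → Value (.cast (.arrow c1 c2) v)

/-- Call-by-value reduction of λᵘFi, including the cast push rules. -/
inductive Step : Tm → Tm → Prop
| beta : Value v → Step (.app (.abs A e) v) (substTm 0 v e)
| appl : Step e1 e1' → Step (.app e1 e2) (.app e1' e2)
| appr : Value v → Step e2 e2' → Step (.app v e2) (.app v e2')
| cast : Step e e' → Step (.cast c e) (.cast c e')
| castId : Value v → Step (.cast .id v) v
| castArr : Value v1 → Value v2 →
    Step (.app (.cast (.arrow c1 c2) v1) v2)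
         (.cast c2 (.app v1 (.cast c1.dual v2)))
| castSeq : Step (.cast (.seq c1 c2) e) (.cast c2 (.cast c1 e))
| castElim : Value v → Step (.cast (.unfold A) (.cast (.fold B) v)) v
| castFix : Step (.cast (.cfix c) e) (.cast (csubst 0 (.cfix c) c) e)

/-- Equi-recursive (cast-free) call-by-value reduction. -/
inductive EStep : Tm → Tm → Prop
| beta : Value v → EStep (.app (.abs A e) v) (substTm 0 v e)
| appl : EStep e1 e1' → EStep (.app e1 e2) (.app e1' e2)
| appr : Value v → EStep e2 e2' → EStep (.app v e2) (.app v e2')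

/-- Erasure of casts. -/
def erase : Tm → Tm
| .var n => .var n
| .lit n => .lit n
| .app a b => .app (erase a) (erase b)
| .abs A e => .abs A (erase e)
| .cast _ e => erase e

/-- Typing of λᵘFi. -/
inductive Typing : List Ty → Tm → Ty → Prop
| var : G[n]? = some A → Typing G (.var n) A
| lit : Typing G (.lit n) .int
| abs : Typing (A :: G) e B → Typing G (.abs A e) (.arrow A B)
| app : Typing G e1 (.arrow A B) → Typing G e2 A → Typing G (.app e1 e2) B
| cast : Typing G e A → TypCast [] A B c → Typing G (.cast c e) B

/-- Equi-recursive typing with elaboration Γ ⊢ₑ e : A ▷ e'. -/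
inductive ETyping : List Ty → Tm → Ty → Tm → Prop
| var : G[n]? = some A → ETyping G (.var n) A (.var n)
| lit : ETyping G (.lit n) .int (.lit n)
| abs : ETyping (A :: G) e B e' → ETyping G (.abs A e) (.arrow A B) (.abs A e')
| app : ETyping G e1 (.arrow A B) e1' → ETyping G e2 A e2' →
        ETyping G (.app e1 e2) B (.app e1' e2')
| eq : ETyping G e A e' → TypCast [] A B c → ETyping G e B (.cast c e')

/-- Iso-recursive Amber subtyping (de Bruijn presentation), n counts bound variable pairs. -/
inductive AmberSub : Nat → Ty → Ty → Prop
| top : Ty.wf n A → AmberSub n A .top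
| int : AmberSub n .int .int
| var : i < n → AmberSub n (.var i) (.var i)
| self : Ty.wf n (.mu A) → AmberSub n (.mu A) (.mu A)
| arrow : AmberSub n B1 A1 → AmberSub n A2 B2 → AmberSub n (.arrow A1 A2) (.arrow B1 B2)
| murec : AmberSub (n+1) A B → AmberSub n (.mu A) (.mu B)

/-- Typing of λᵘ<:Fi: λᵘFi typing plus subsumption. -/
inductive STyping : List Ty → Tm → Ty → Prop
| var : G[n]? = some A → STyping G (.var n) A
| lit : STyping G (.lit n) .int
| abs : STyping (A :: G) e B → STyping G (.abs A e) (.arrow A B)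
| app : STyping G e1 (.arrow A B) → STyping G e2 A → STyping G (.app e1 e2) B
| cast : STyping G e A → TypCast [] A B c → STyping G (.cast c e) B
| sub : STyping G e A → AmberSub 0 A B → STyping G e B

/-- Divergence under a reduction relation. -/
def Diverges (R : Tm → Tm → Prop) (e : Tm) : Prop :=
  ∀ e', Relation.ReflTransGen R e e' → ∃ e'', R e' e''


lemma getElem?_insert {α} (E1 F E2 : List α) (n : Nat) :
    (E1 ++ F ++ E2)[(if n < E1.length then n else n + F.length)]? = (E1 ++ E2)[n]? := by
  by_cases hn : n < E1.length
  · simp only [if_pos hn, List.append_assoc, List.getElem?_append, if_pos hn]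
  · have h1 : ¬ n + F.length < E1.length := by omega
    have h2 : ¬ n + F.length - E1.length < F.length := by omega
    simp only [if_neg hn, List.append_assoc, List.getElem?_append, if_neg h1, if_neg h2]
    congr 1
    omega

lemma typcast_weaken {G A B c} (h : TypCast G A B c) :
    ∀ E1 E2 F, G = E1 ++ E2 → TypCast (E1 ++ F ++ E2) A B (cshift F.length E1.length c) := by
  induction h with
  | id => intros; exact TypCast.id
  | arrow h1 h2 ih1 ih2 =>
      intro E1 E2 F hG
      exact TypCast.arrow (ih1 E1 E2 F hG) (ih2 E1 E2 F hG)
  | unfold => intros; exact TypCast.unfold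
  | fold => intros; exact TypCast.fold
  | seq h1 h2 ih1 ih2 =>
      intro E1 E2 F hG
      exact TypCast.seq (ih1 E1 E2 F hG) (ih2 E1 E2 F hG)
  | var hn =>
      rename_i E n A' B'
      intro E1 E2 F hG
      subst hG
      simp only [cshift]
      have hins := getElem?_insert E1 F E2 n
      by_cases hlt : n < E1.length
      · rw [if_pos hlt]
        rw [if_pos hlt] at hins
        exact TypCast.var (hins.trans hn)
      · rw [if_neg hlt]
        rw [if_neg hlt] at hins
        exact TypCast.var (hins.trans hn)
  | fix h1 ih1 =>
      rename_i A1 A2 B1 B2 E' c1 c2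
      intro E1 E2 F hG
      simp only [cshift]
      refine TypCast.fix ?_
      have := ih1 ((Ty.arrow A1 A2, Ty.arrow B1 B2) :: E1) E2 F (by rw [hG]; rfl)
      simpa [cshift] using this

lemma typcast_subst {G A' B' c} (h : TypCast G A' B' c) :
    ∀ E1 E2 A B s, G = E1 ++ (A, B) :: E2 → TypCast (E1 ++ E2) A B s →
      TypCast (E1 ++ E2) A' B' (csubst E1.length s c) := by
  induction h with
  | id => intros; exact TypCast.id
  | arrow h1 h2 ih1 ih2 =>
      intro E1 E2 A B s hG hs
      exact TypCast.arrow (ih1 E1 E2 A B s hG hs) (ih2 E1 E2 A B s hG hs)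
  | unfold => intros; exact TypCast.unfold
  | fold => intros; exact TypCast.fold
  | seq h1 h2 ih1 ih2 =>
      intro E1 E2 A B s hG hs
      exact TypCast.seq (ih1 E1 E2 A B s hG hs) (ih2 E1 E2 A B s hG hs)
  | var hn =>
      rename_i E n X Y
      intro E1 E2 A B s hG hs
      subst hG
      simp only [csubst]
      by_cases h1 : n = E1.length
      · subst h1
        rw [if_pos rfl]
        rw [List.getElem?_append, if_neg (lt_irrefl _), Nat.sub_self,
          List.getElem?_cons_zero] at hn
        cases hn
        exact hs
      · rw [if_neg h1]
        by_cases h2 : E1.length < n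
        · rw [if_pos h2]
          refine TypCast.var ?_
          rw [List.getElem?_append, if_neg (by omega)] at hn
          have he : n - E1.length = (n - E1.length - 1) + 1 := by omega
          rw [he, List.getElem?_cons_succ] at hn
          rw [List.getElem?_append, if_neg (by omega)]
          have h4 : n - 1 - E1.length = n - E1.length - 1 := by omega
          rw [h4]
          exact hn
        · rw [if_neg h2]
          have h3 : n < E1.length := by omega
          refine TypCast.var ?_
          rw [List.getElem?_append, if_pos h3] at hn
          rw [List.getElem?_append, if_pos h3]
          exact hn
  | fix h1 ih1 =>
      rename_i A1 A2 B1 B2 E' c1 c2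
      intro E1 E2 A B s hG hs
      simp only [csubst]
      refine TypCast.fix ?_
      have hw : TypCast ((Ty.arrow A1 A2, Ty.arrow B1 B2) :: (E1 ++ E2)) A B
          (cshift 1 0 s) := by
        have := typcast_weaken hs [] (E1 ++ E2) [(Ty.arrow A1 A2, Ty.arrow B1 B2)] rfl
        simpa using this
      have := ih1 ((Ty.arrow A1 A2, Ty.arrow B1 B2) :: E1) E2 A B (cshift 1 0 s)
        (by rw [hG]; rfl) (by simpa using hw)
      simpa [csubst] using this

lemma typcast_dual {E A B c} (h : TypCast E A B c) :
    TypCast (E.map Prod.swap) B A c.dual := by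
  induction h with
  | id => exact TypCast.id
  | arrow _ _ ih1 ih2 => exact TypCast.arrow ih1 ih2
  | unfold => exact TypCast.fold
  | fold => exact TypCast.unfold
  | seq _ _ ih1 ih2 => exact TypCast.seq ih2 ih1
  | var hn => exact TypCast.var (by rw [List.getElem?_map, hn]; rfl)
  | fix _ ih => exact TypCast.fix (by simpa [Cast.dual] using ih)

lemma typcast_id_inv {E T S} (h : TypCast E T S .id) : T = S := by
  cases h; rfl

lemma typcast_arrow_inv {E T S c1 c2} (h : TypCast E T S (.arrow c1 c2)) :
    ∃ A1 A2 B1 B2, T = .arrow A1 A2 ∧ S = .arrow B1 B2 ∧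
      TypCast E A1 B1 c1 ∧ TypCast E A2 B2 c2 := by
  cases h with
  | arrow h1 h2 => exact ⟨_, _, _, _, rfl, rfl, h1, h2⟩

lemma typcast_seq_inv {E T S c1 c2} (h : TypCast E T S (.seq c1 c2)) :
    ∃ B, TypCast E T B c1 ∧ TypCast E B S c2 := by
  cases h with
  | seq h1 h2 => exact ⟨_, h1, h2⟩

lemma typcast_unfold_inv {E T S A0} (h : TypCast E T S (.unfold A0)) :
    ∃ A', T = .mu A' ∧ S = tsubst 0 (.mu A') A' := by
  cases h with
  | unfold => exact ⟨_, rfl, rfl⟩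

lemma typcast_fold_inv {E T S A0} (h : TypCast E T S (.fold A0)) :
    ∃ A', S = .mu A' ∧ T = tsubst 0 (.mu A') A' := by
  cases h with
  | fold => exact ⟨_, rfl, rfl⟩

lemma typcast_fix_inv {E T S c} (h : TypCast E T S (.cfix c)) :
    ∃ A1 A2 B1 B2 c1 c2, T = .arrow A1 A2 ∧ S = .arrow B1 B2 ∧ c = .arrow c1 c2 ∧
      TypCast ((T, S) :: E) T S (.arrow c1 c2) := by
  cases h with
  | fix h1 => exact ⟨_, _, _, _, _, _, rfl, rfl, rfl, h1⟩

lemma typing_weaken {G e B} (h : Typing G e B) :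
    ∀ G1 G2 F, G = G1 ++ G2 → Typing (G1 ++ F ++ G2) (shiftTm F.length G1.length e) B := by
  induction h with
  | var hn =>
      rename_i G' n A'
      intro G1 G2 F hG
      subst hG
      simp only [shiftTm]
      have hins := getElem?_insert G1 F G2 n
      by_cases hlt : n < G1.length
      · rw [if_pos hlt]
        rw [if_pos hlt] at hins
        exact Typing.var (hins.trans hn)
      · rw [if_neg hlt]
        rw [if_neg hlt] at hins
        exact Typing.var (hins.trans hn)
  | lit => intros; exact Typing.lit
  | abs h1 ih1 =>
      rename_i A' G' e' B'
      intro G1 G2 F hG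
      simp only [shiftTm]
      refine Typing.abs ?_
      have := ih1 (A' :: G1) G2 F (by rw [hG]; rfl)
      simpa using this
  | app h1 h2 ih1 ih2 =>
      intro G1 G2 F hG
      exact Typing.app (ih1 G1 G2 F hG) (ih2 G1 G2 F hG)
  | cast h1 hc ih1 =>
      intro G1 G2 F hG
      exact Typing.cast (ih1 G1 G2 F hG) hc

lemma typing_subst {G e B} (h : Typing G e B) :
    ∀ G1 G2 A v, G = G1 ++ A :: G2 → Typing (G1 ++ G2) v A →
      Typing (G1 ++ G2) (substTm G1.length v e) B := by
  induction h with
  | var hn =>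
      rename_i G' n X
      intro G1 G2 A v hG hv
      subst hG
      simp only [substTm]
      by_cases h1 : n = G1.length
      · subst h1
        rw [if_pos rfl]
        rw [List.getElem?_append, if_neg (lt_irrefl _), Nat.sub_self,
          List.getElem?_cons_zero] at hn
        cases hn
        exact hv
      · rw [if_neg h1]
        by_cases h2 : G1.length < n
        · rw [if_pos h2]
          refine Typing.var ?_
          rw [List.getElem?_append, if_neg (by omega)] at hn
          have he : n - G1.length = (n - G1.length - 1) + 1 := by omega
          rw [he, List.getElem?_cons_succ] at hn
          rw [List.getElem?_append, if_neg (by omega)]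
          have h4 : n - 1 - G1.length = n - G1.length - 1 := by omega
          rw [h4]
          exact hn
        · rw [if_neg h2]
          have h3 : n < G1.length := by omega
          refine Typing.var ?_
          rw [List.getElem?_append, if_pos h3] at hn
          rw [List.getElem?_append, if_pos h3]
          exact hn
  | lit => intros; exact Typing.lit
  | abs h1 ih1 =>
      rename_i A' G' e' B'
      intro G1 G2 A v hG hv
      simp only [substTm]
      refine Typing.abs ?_
      have hw : Typing (A' :: (G1 ++ G2)) (shiftTm 1 0 v) A := by
        have := typing_weaken hv [] (G1 ++ G2) [A'] rfl
        simpa using this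
      have := ih1 (A' :: G1) G2 A (shiftTm 1 0 v) (by rw [hG]; rfl) (by simpa using hw)
      simpa using this
  | app h1 h2 ih1 ih2 =>
      intro G1 G2 A v hG hv
      exact Typing.app (ih1 G1 G2 A v hG hv) (ih2 G1 G2 A v hG hv)
  | cast h1 hc ih1 =>
      intro G1 G2 A v hG hv
      exact Typing.cast (ih1 G1 G2 A v hG hv) hc

/-- Preservation for λᵘFi. -/
theorem preservation (e e' : Tm) (A : Ty)
    (h : Typing [] e A) (hs : Step e e') : Typing [] e' A := by
  induction hs generalizing A with
  | beta hv =>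
      cases h with
      | app h1 h2 =>
        cases h1 with
        | abs hb =>
          have := typing_subst hb [] _ _ _ rfl (by simpa using h2)
          simpa using this
  | appl _ ih =>
      cases h with
      | app h1 h2 => exact Typing.app (ih _ h1) h2
  | appr _ _ ih =>
      cases h with
      | app h1 h2 => exact Typing.app h1 (ih _ h2)
  | cast _ ih =>
      cases h with
      | cast h1 hc => exact Typing.cast (ih _ h1) hc
  | castId hv =>
      cases h with
      | cast h1 hc =>
        obtain rfl := typcast_id_inv hc
        exact h1
  | castArr hv1 hv2 =>
      cases h with
      | app h1 h2 =>
        cases h1 with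
        | cast hv hc =>
          obtain ⟨A1, A2, B1, B2, rfl, hSeq, hc1, hc2⟩ := typcast_arrow_inv hc
          cases hSeq
          have hd := typcast_dual hc1
          exact Typing.cast (Typing.app hv (Typing.cast h2 (by simpa using hd))) hc2
  | castSeq =>
      cases h with
      | cast h1 hc =>
        obtain ⟨B, hc1, hc2⟩ := typcast_seq_inv hc
        exact Typing.cast (Typing.cast h1 hc1) hc2
  | castElim hv =>
      cases h with
      | cast h1 hc =>
        obtain ⟨A', rfl, rfl⟩ := typcast_unfold_inv hc
        cases h1 with
        | cast h2 hc2 =>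
          obtain ⟨A'', hEq, rfl⟩ := typcast_fold_inv hc2
          cases hEq
          exact h2
  | castFix =>
      cases h with
      | cast h1 hc =>
        obtain ⟨A1, A2, B1, B2, c1, c2, rfl, rfl, rfl, hfix⟩ := typcast_fix_inv hc
        refine Typing.cast h1 ?_
        have := typcast_subst hfix [] [] _ _ _ rfl (by simpa using TypCast.fix hfix)
        simpa using this
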